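/- arXiv:2012.14772 — 2 statements merged into one kernel-verified Lean document; each statement's English description precedes it below -/
import Mathlib

section
/- Let (Ω,F,P) be a probability space, t fixed, and ξ a random variable taking values in a Polish space S with discrete law P_ξ = Σ_{i=1}^m p_i δ_{x_i}, where x_1,…,x_m ∈ S are distinct and p_i > 0 with Σ p_i = 1, and ξ is G-measurable for a sub-σ-algebra G. Suppose there exists a G-measurable random variable U_G uniform on [0,1]. Then there exists a G-measurable random variable U_ξ uniform on [0,1] and independent of ξ. -/
/-!
On each atom `{ξ = a}` of positive probability, the conditional law of `U_G` is atomless, being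
absolutely continuous with respect to the uniform law. Composing `U_G` with the distribution
function of this conditional law therefore gives a variable that is uniform under `P(· | ξ = a)`
(probability integral transform). Gluing these over the finitely many atoms yields a
`G`-measurable `U_ξ` whose conditional law given `ξ = a` is uniform for every atom `a`, which is
to say that `U_ξ` is uniform and independent of `ξ`.
-/

open MeasureTheory ProbabilityTheory Set
open scoped ENNReal

theorem Real.volume_restrict_Icc_zero_one_Iic (t : ℝ) :
    volume.restrict (Icc (0 : ℝ) 1) (Iic t) = ENNReal.ofReal (min t 1) := by
  have : Iic t ∩ Icc 0 1 = Icc 0 (min t 1) := by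
    ext r
    simp only [mem_inter_iff, mem_Iic, mem_Icc, le_min_iff]
    tauto
  rw [Measure.restrict_apply measurableSet_Iic, this, Real.volume_Icc, sub_zero]

namespace ProbabilityTheory

variable (μ : Measure ℝ) [IsProbabilityMeasure μ] [NullSingletonClass μ]

theorem continuous_cdf : Continuous (cdf μ) := by
  refine continuous_iff_continuousAt.2 fun r ↦ ?_
  rw [(monotone_cdf μ).continuousAt_iff_leftLim_eq_rightLim, StieltjesFunction.rightLim_eq]
  have h := (cdf μ).measure_singleton r
  rw [measure_cdf, measure_singleton, eq_comm, ENNReal.ofReal_eq_zero, sub_nonpos] at h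
  exact le_antisymm ((monotone_cdf μ).leftLim_le le_rfl) h

theorem Ioo_subset_range_cdf : Ioo 0 1 ⊆ range (cdf μ) := fun _ hu ↦
  mem_range_of_exists_le_of_exists_ge (continuous_cdf μ)
    (((tendsto_cdf_atBot μ).eventually (gt_mem_nhds hu.1)).exists.imp fun _ ↦ le_of_lt)
    (((tendsto_cdf_atTop μ).eventually (lt_mem_nhds hu.2)).exists.imp fun _ ↦ le_of_lt)

/- If `cdf μ y = t` then `Iic y ⊆ {cdf μ ≤ t}`, and if `cdf μ y = v > t` then `{cdf μ ≤ t} ⊆ Iic y`;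
by the intermediate value theorem such `y` exist for `t > 0` and all `v ∈ (t, 1)`. -/
theorem measureReal_setOf_cdf_le {t : ℝ} (ht : t ∈ Ico 0 1) :
    μ.real {r | cdf μ r ≤ t} = t := by
  refine le_antisymm (le_of_forall_gt_imp_ge_of_dense fun v hv ↦ ?_) ?_
  · rcases lt_or_ge v 1 with hv1 | hv1
    · obtain ⟨y, rfl⟩ := Ioo_subset_range_cdf μ ⟨ht.1.trans_lt hv, hv1⟩
      refine (measureReal_mono fun r hr ↦ ?_).trans_eq (cdf_eq_real μ y).symm
      exact ((monotone_cdf μ).reflect_lt (lt_of_le_of_lt hr hv)).le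
    · exact measureReal_le_one.trans hv1
  · rcases ht.1.eq_or_lt with rfl | ht0
    · exact measureReal_nonneg
    · obtain ⟨y, rfl⟩ := Ioo_subset_range_cdf μ ⟨ht0, ht.2⟩
      exact (cdf_eq_real μ y).trans_le (measureReal_mono fun r hr ↦ monotone_cdf μ hr)

theorem measure_setOf_cdf_le (t : ℝ) :
    μ {r | cdf μ r ≤ t} = ENNReal.ofReal (min t 1) := by
  rcases lt_or_ge t 0 with ht0 | ht0
  · have : {r | cdf μ r ≤ t} = ∅ :=
      eq_empty_of_forall_notMem fun r hr ↦ (cdf_nonneg μ r).not_gt (lt_of_le_of_lt hr ht0)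
    rw [this, measure_empty, ENNReal.ofReal_of_nonpos (min_le_of_left_le ht0.le)]
  rcases lt_or_ge t 1 with ht1 | ht1
  · rw [min_eq_left ht1.le, ← ofReal_measureReal, measureReal_setOf_cdf_le μ ⟨ht0, ht1⟩]
  · have : {r | cdf μ r ≤ t} = univ := eq_univ_of_forall fun r ↦ (cdf_le_one μ r).trans ht1
    rw [this, measure_univ, min_eq_right ht1, ENNReal.ofReal_one]

theorem map_cdf_eq_restrict_Icc : μ.map (cdf μ) = volume.restrict (Icc 0 1) := by
  have hF : Measurable (cdf μ) := (monotone_cdf μ).measurable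
  refine Measure.ext_of_Iic _ _ fun t ↦ ?_
  rw [Measure.map_apply hF measurableSet_Iic, Real.volume_restrict_Icc_zero_one_Iic]
  exact measure_setOf_cdf_le μ t

end ProbabilityTheory

section Fibers

variable {Ω α β : Type*} [MeasurableSpace Ω] [MeasurableSpace α] [MeasurableSingletonClass α]
  [MeasurableSpace β] {P : Measure Ω} {ξ : Ω → α} {U : Ω → β} {s : Finset α}

theorem measure_eq_sum_preimage_singleton_inter (hξ : Measurable ξ) (hs : ∀ᵐ ω ∂P, ξ ω ∈ s)
    {T : Set Ω} (hT : MeasurableSet T) : P T = ∑ a ∈ s, P (ξ ⁻¹' {a} ∩ T) := by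
  have hunion : T ∩ ξ ⁻¹' s = ⋃ a ∈ s, ξ ⁻¹' {a} ∩ T := by
    rw [← Finset.set_biUnion_coe, ← biUnion_preimage_singleton, ← iUnion₂_inter, inter_comm]
  have hdisj : PairwiseDisjoint (↑s) fun a ↦ ξ ⁻¹' {a} ∩ T := fun a _ b _ hab ↦
    ((disjoint_singleton.2 hab).preimage ξ).mono inter_subset_left inter_subset_left
  rw [← measure_inter_conull (t := ξ ⁻¹' s) (ae_iff.1 hs), hunion,
    measure_biUnion_finset hdisj fun a _ ↦ (hξ (measurableSet_singleton a)).inter hT]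

variable [IsProbabilityMeasure P] {μ : Measure β}

theorem measure_preimage_inter_preimage_of_cond_map_eq (hξ : Measurable ξ) (hU : Measurable U)
    (hs : ∀ᵐ ω ∂P, ξ ω ∈ s) (hcond : ∀ a ∈ s, P (ξ ⁻¹' {a}) ≠ 0 → (P[|ξ ⁻¹' {a}]).map U = μ)
    {A : Set α} {B : Set β} (hA : MeasurableSet A) (hB : MeasurableSet B) :
    P (ξ ⁻¹' A ∩ U ⁻¹' B) = P (ξ ⁻¹' A) * μ B := by
  have hfiber : ∀ a ∈ s, P (ξ ⁻¹' {a} ∩ U ⁻¹' B) = P (ξ ⁻¹' {a}) * μ B := by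
    intro a ha
    rw [← cond_mul_eq_inter (hξ (measurableSet_singleton a)), mul_comm]
    rcases eq_or_ne (P (ξ ⁻¹' {a})) 0 with h0 | h0
    · rw [h0, zero_mul, zero_mul]
    · rw [← hcond a ha h0, Measure.map_apply hU hB]
  rw [measure_eq_sum_preimage_singleton_inter hξ hs ((hξ hA).inter (hU hB)),
    measure_eq_sum_preimage_singleton_inter hξ hs (hξ hA), Finset.sum_mul]
  refine Finset.sum_congr rfl fun a ha ↦ ?_
  rw [← inter_assoc, ← preimage_inter]
  by_cases haA : a ∈ A
  · rw [inter_eq_left.2 (singleton_subset_iff.2 haA), hfiber a ha]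
  · rw [singleton_inter_eq_empty.2 haA, preimage_empty, empty_inter, measure_empty, zero_mul]

theorem map_eq_of_cond_map_eq (hξ : Measurable ξ) (hU : Measurable U)
    (hs : ∀ᵐ ω ∂P, ξ ω ∈ s) (hcond : ∀ a ∈ s, P (ξ ⁻¹' {a}) ≠ 0 → (P[|ξ ⁻¹' {a}]).map U = μ) :
    P.map U = μ := by
  ext B hB
  have h := measure_preimage_inter_preimage_of_cond_map_eq hξ hU hs hcond MeasurableSet.univ hB
  rwa [preimage_univ, univ_inter, measure_univ, one_mul, ← Measure.map_apply hU hB] at h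

theorem indepFun_of_cond_map_eq (hξ : Measurable ξ) (hU : Measurable U)
    (hs : ∀ᵐ ω ∂P, ξ ω ∈ s) (hcond : ∀ a ∈ s, P (ξ ⁻¹' {a}) ≠ 0 → (P[|ξ ⁻¹' {a}]).map U = μ) :
    IndepFun ξ U P := by
  rw [indepFun_iff_measure_inter_preimage_eq_mul]
  intro A B hA hB
  rw [measure_preimage_inter_preimage_of_cond_map_eq hξ hU hs hcond hA hB,
    ← map_eq_of_cond_map_eq hξ hU hs hcond, Measure.map_apply hU hB]

end Fibers

section FiberwiseCdf

variable {Ω α : Type*} {mΩ : MeasurableSpace Ω}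

noncomputable def fiberwiseCdfTransform (P : Measure Ω) (ξ : Ω → α) (U : Ω → ℝ) (s : Finset α)
    (ω : Ω) : ℝ :=
  ∑ a ∈ s, (ξ ⁻¹' {a}).indicator (fun ω ↦ cdf ((P[|ξ ⁻¹' {a}]).map U) (U ω)) ω

variable {P : Measure Ω} {ξ : Ω → α} {U : Ω → ℝ} {s : Finset α} {a : α}

theorem measurable_fiberwiseCdfTransform [MeasurableSpace α] [MeasurableSingletonClass α]
    {G : MeasurableSpace Ω} (hξ : Measurable[G] ξ) (hU : Measurable[G] U) :
    Measurable[G] (fiberwiseCdfTransform P ξ U s) :=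
  Finset.measurable_sum _ fun a _ ↦
    ((monotone_cdf _).measurable.comp hU).indicator (hξ (measurableSet_singleton a))

theorem fiberwiseCdfTransform_of_mem (ha : a ∈ s) {ω : Ω} (hω : ξ ω = a) :
    fiberwiseCdfTransform P ξ U s ω = cdf ((P[|ξ ⁻¹' {a}]).map U) (U ω) := by
  rw [fiberwiseCdfTransform, Finset.sum_eq_single_of_mem a ha,
    indicator_of_mem (s := ξ ⁻¹' {a}) hω]
  exact fun b _ hba ↦ indicator_of_notMem (fun hb ↦ hba (hb.symm.trans hω)) _

theorem cond_map_fiberwiseCdfTransform [MeasurableSpace α] [MeasurableSingletonClass α]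
    [IsFiniteMeasure P] [NullSingletonClass (P.map U)]
    (hξ : Measurable ξ) (hU : Measurable U) (ha : a ∈ s) (hPa : P (ξ ⁻¹' {a}) ≠ 0) :
    (P[|ξ ⁻¹' {a}]).map (fiberwiseCdfTransform P ξ U s) = volume.restrict (Icc 0 1) := by
  set ν := (P[|ξ ⁻¹' {a}]).map U
  have : IsProbabilityMeasure P[|ξ ⁻¹' {a}] := cond_isProbabilityMeasure hPa
  have : IsProbabilityMeasure ν := Measure.isProbabilityMeasure_map hU.aemeasurable
  have : NullSingletonClass ν :=
    ⟨fun r ↦ (cond_absolutelyContinuous.map hU) (measure_singleton r)⟩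
  have hae : fiberwiseCdfTransform P ξ U s =ᵐ[P[|ξ ⁻¹' {a}]] cdf ν ∘ U :=
    (ae_cond_mem (hξ (measurableSet_singleton a))).mono fun ω hω ↦
      fiberwiseCdfTransform_of_mem ha hω
  rw [Measure.map_congr hae, ← Measure.map_map (monotone_cdf ν).measurable hU,
    map_cdf_eq_restrict_Icc]

end FiberwiseCdf

theorem stmt_5_general {Ω S : Type*} (G : MeasurableSpace Ω) [MeasurableSpace Ω]
    [MetricSpace S] [MeasurableSpace S] [BorelSpace S]
    (hG : G ≤ ‹MeasurableSpace Ω›)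
    (P : Measure Ω) [IsProbabilityMeasure P]
    (ξ : Ω → S) (hξ : Measurable[G] ξ)
    (m : ℕ) (x : Fin m → S) (p : Fin m → ℝ≥0∞)
    (hlaw : P.map ξ = ∑ i, p i • Measure.dirac (x i))
    (UG : Ω → ℝ) (hUG : Measurable[G] UG)
    (hUGlaw : P.map UG = volume.restrict (Set.Icc (0:ℝ) 1)) :
    ∃ Uξ : Ω → ℝ, Measurable[G] Uξ ∧
      P.map Uξ = volume.restrict (Set.Icc (0:ℝ) 1) ∧
      ProbabilityTheory.IndepFun ξ Uξ P := by
  classical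
  have hξ' : Measurable ξ := hξ.mono hG le_rfl
  have hUG' : Measurable UG := hUG.mono hG le_rfl
  set s : Finset S := Finset.univ.image x
  have hs : ∀ᵐ ω ∂P, ξ ω ∈ s := by
    refine ae_of_ae_map hξ'.aemeasurable ?_
    rw [hlaw, ae_iff]
    simp [s]
  have : NullSingletonClass (P.map UG) := hUGlaw ▸ inferInstance
  have hcond a (ha : a ∈ s) (hPa : P (ξ ⁻¹' {a}) ≠ 0) :=
    cond_map_fiberwiseCdfTransform hξ' hUG' ha hPa
  have hUξ : Measurable (fiberwiseCdfTransform P ξ UG s) :=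
    measurable_fiberwiseCdfTransform hξ' hUG'
  exact ⟨fiberwiseCdfTransform P ξ UG s, measurable_fiberwiseCdfTransform hξ hUG,
    map_eq_of_cond_map_eq hξ' hUξ hs hcond, indepFun_of_cond_map_eq hξ' hUξ hs hcond⟩

/-- Discrete randomization lemma: if a `G`-measurable random variable `ξ` with values
in a Polish space has a finitely supported law and `G` supports a uniform random
variable, then `G` supports a uniform random variable independent of `ξ`. -/
theorem stmt_5 {Ω S : Type*} (G : MeasurableSpace Ω) [MeasurableSpace Ω]
    [MetricSpace S] [CompleteSpace S] [SecondCountableTopology S]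
    [MeasurableSpace S] [BorelSpace S]
    (hG : G ≤ ‹MeasurableSpace Ω›)
    (P : Measure Ω) [IsProbabilityMeasure P]
    (ξ : Ω → S) (hξ : Measurable[G] ξ)
    (m : ℕ) (x : Fin m → S) (hx : Function.Injective x)
    (p : Fin m → ℝ≥0∞) (hp : ∀ i, 0 < p i) (hpsum : ∑ i, p i = 1)
    (hlaw : P.map ξ = ∑ i, p i • Measure.dirac (x i))
    (UG : Ω → ℝ) (hUG : Measurable[G] UG)
    (hUGlaw : P.map UG = volume.restrict (Set.Icc (0:ℝ) 1)) :
    ∃ Uξ : Ω → ℝ, Measurable[G] Uξ ∧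
      P.map Uξ = volume.restrict (Set.Icc (0:ℝ) 1) ∧
      ProbabilityTheory.IndepFun ξ Uξ P :=
  stmt_5_general G hG P ξ hξ m x p hlaw UG hUG hUGlaw
end

section
/- Let (Ω,F,P) be a probability space supporting a uniform random variable on [0,1] measurable with respect to a sub-σ-algebra G that is rich enough (in the sense that every square-integrable law on C([0,T];H₀) is realized by some continuous B([0,T])⊗G-measurable process). Then for every μ ∈ P₂(C([0,T];H₀)) there exist a continuous B([0,T])⊗G-measurable process ξ with law μ and a G-measurable random variable U_ξ uniform on [0,1] such that ξ and U_ξ are independent. -/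
/-!
Embed `ℝ × C([0,T];H₀)` measurably into a bounded subset of `C([0,T];H₀)` (a standard Borel space
embeds into `ℝ`, and for `x ≠ 0` the map `s ↦ arctan s • x` is a bounded continuous injection).
The image `ν` of `Unif[0,1] ⊗ μ` is then square integrable, so richness realizes it by a
`G`-measurable process; a measurable left inverse of the embedding turns that process into a
`G`-measurable pair `(U, ξ)` with law `Unif[0,1] ⊗ μ`.
-/

open MeasureTheory ProbabilityTheory

/-- The path space `C([0,T]; H₀)` with the sup norm. -/
abbrev PathSp (T : ℝ) (H₀ : Type*) [NormedAddCommGroup H₀] :=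
  C(Set.Icc (0:ℝ) T, H₀)

theorem exists_bounded_measurableEmbedding (α : Type*) [MeasurableSpace α]
    [StandardBorelSpace α] {E : Type*} [NormedAddCommGroup E] [NormedSpace ℝ E] [Nontrivial E]
    [MeasurableSpace E] [BorelSpace E] :
    ∃ J : α → E, MeasurableEmbedding J ∧ ∃ C, ∀ a, ‖J a‖ ≤ C := by
  obtain ⟨r, hr⟩ := exists_measurableEmbedding_real (α := α)
  obtain ⟨x, hx⟩ := exists_ne (0 : E)
  have hf : MeasurableEmbedding fun s : ℝ => Real.arctan s • x :=
    (Real.continuous_arctan.smul continuous_const).measurableEmbedding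
      ((smul_left_injective ℝ hx).comp Real.arctan_injective)
  refine ⟨fun a => Real.arctan (r a) • x, hf.comp hr, Real.pi / 2 * ‖x‖, fun a => ?_⟩
  rw [norm_smul, Real.norm_eq_abs]
  gcongr
  exact (abs_lt.2 ⟨Real.neg_pi_div_two_lt_arctan _, Real.arctan_lt_pi_div_two _⟩).le

theorem MeasurableEmbedding.exists_measurable_map_eq {Ω α β : Type*} {G : MeasurableSpace Ω}
    [MeasurableSpace Ω] [MeasurableSpace α] [MeasurableSpace β] [Nonempty α]
    (hG : G ≤ ‹MeasurableSpace Ω›) {P : Measure Ω} {J : α → β} (hJ : MeasurableEmbedding J)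
    {ρ : Measure α} {Y : Ω → β} (hY : Measurable[G] Y) (hlaw : P.map Y = ρ.map J) :
    ∃ X : Ω → α, Measurable[G] X ∧ P.map X = ρ := by
  obtain ⟨Φ, hΦ, hΦJ⟩ := hJ.exists_measurable_extend measurable_id fun _ => inferInstance
  refine ⟨Φ ∘ Y, hΦ.comp hY, ?_⟩
  rw [← Measure.map_map hΦ (hY.mono hG le_rfl), hlaw, Measure.map_map hΦ hJ.measurable, hΦJ,
    Measure.map_id]

section Product

variable {Ω α β : Type*} [MeasurableSpace Ω] [MeasurableSpace α] [MeasurableSpace β]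
  {P : Measure Ω} {ρ : Measure α} {ρ' : Measure β} {Z : Ω → α × β}

theorem map_fst_of_map_eq_prod [IsProbabilityMeasure ρ'] (hZ : Measurable Z)
    (h : P.map Z = ρ.prod ρ') :
    P.map (Prod.fst ∘ Z) = ρ := by
  rw [← Measure.map_map measurable_fst hZ, h, Measure.map_fst_prod, measure_univ, one_smul]

theorem map_snd_of_map_eq_prod [IsProbabilityMeasure ρ] [SFinite ρ'] (hZ : Measurable Z)
    (h : P.map Z = ρ.prod ρ') :
    P.map (Prod.snd ∘ Z) = ρ' := by
  rw [← Measure.map_map measurable_snd hZ, h, Measure.map_snd_prod, measure_univ, one_smul]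

theorem indepFun_fst_snd_of_map_eq_prod [IsFiniteMeasure P] [IsProbabilityMeasure ρ]
    [IsProbabilityMeasure ρ'] (hZ : Measurable Z) (h : P.map Z = ρ.prod ρ') :
    IndepFun (Prod.fst ∘ Z) (Prod.snd ∘ Z) P := by
  rw [indepFun_iff_map_prod_eq_prod_map_map (measurable_fst.comp hZ).aemeasurable
    (measurable_snd.comp hZ).aemeasurable, map_fst_of_map_eq_prod hZ h,
    map_snd_of_map_eq_prod hZ h]
  exact h

end Product

theorem stmt_6_general {Ω H₀ : Type*} (G : MeasurableSpace Ω) [MeasurableSpace Ω]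
    [NormedAddCommGroup H₀] [InnerProductSpace ℝ H₀] [CompleteSpace H₀]
    [SecondCountableTopology H₀] [Nontrivial H₀]
    (hG : G ≤ ‹MeasurableSpace Ω›)
    (P : Measure Ω) [IsProbabilityMeasure P]
    (T : ℝ) (hT : 0 < T)
    [MeasurableSpace (PathSp T H₀)] [BorelSpace (PathSp T H₀)]
    (hrich : ∀ ν : Measure (PathSp T H₀), IsProbabilityMeasure ν →
      Integrable (fun x : PathSp T H₀ => ‖x‖ ^ 2) ν →
      ∃ ξ : Ω → PathSp T H₀,
        Measurable[G] ξ ∧ Integrable (fun ω => ‖ξ ω‖ ^ 2) P ∧ P.map ξ = ν)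
    (μ : Measure (PathSp T H₀)) [IsProbabilityMeasure μ]
    (hμ2 : Integrable (fun x : PathSp T H₀ => ‖x‖ ^ 2) μ) :
    ∃ (ξ : Ω → PathSp T H₀) (Uξ : Ω → ℝ),
      Measurable[G] ξ ∧ Integrable (fun ω => ‖ξ ω‖ ^ 2) P ∧ P.map ξ = μ ∧
      Measurable[G] Uξ ∧ P.map Uξ = volume.restrict (Set.Icc (0:ℝ) 1) ∧
      ProbabilityTheory.IndepFun ξ Uξ P := by
  set unif : Measure ℝ := volume.restrict (Set.Icc (0:ℝ) 1)
  have : IsProbabilityMeasure unif := ⟨by simp [unif]⟩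
  have : Nonempty (Set.Icc (0:ℝ) T) := ⟨⟨0, le_rfl, hT.le⟩⟩
  obtain ⟨J, hJ, C, hJC⟩ :=
    exists_bounded_measurableEmbedding (ℝ × PathSp T H₀) (E := PathSp T H₀)
  have hν : IsProbabilityMeasure ((unif.prod μ).map J) :=
    Measure.isProbabilityMeasure_map hJ.measurable.aemeasurable
  have hν2 : Integrable (fun x : PathSp T H₀ => ‖x‖ ^ 2) ((unif.prod μ).map J) := by
    rw [integrable_map_measure (by fun_prop) hJ.measurable.aemeasurable]
    refine .of_bound (hJ.measurable.norm.pow_const 2).aestronglyMeasurable (C ^ 2)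
      (ae_of_all _ fun p => ?_)
    simpa using pow_le_pow_left₀ (norm_nonneg _) (hJC p) 2
  obtain ⟨Y, hYG, -, hYlaw⟩ := hrich _ hν hν2
  obtain ⟨Z, hZG, hZlaw⟩ := hJ.exists_measurable_map_eq hG hYG hYlaw
  have hZ : Measurable Z := hZG.mono hG le_rfl
  have hξlaw := map_snd_of_map_eq_prod hZ hZlaw
  refine ⟨Prod.snd ∘ Z, Prod.fst ∘ Z, measurable_snd.comp hZG, ?_, hξlaw,
    measurable_fst.comp hZG, map_fst_of_map_eq_prod hZ hZlaw,
    (indepFun_fst_snd_of_map_eq_prod hZ hZlaw).symm⟩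
  exact (integrable_map_measure (by fun_prop) (measurable_snd.comp hZ).aemeasurable).1
    (hξlaw ▸ hμ2)

/-- If `G` supports a uniform random variable and is rich enough (every square-integrable
law on `C([0,T];H₀)` is realized by a `G`-measurable process), then every
`μ ∈ P₂(C([0,T];H₀))` is realized by a `G`-measurable process `ξ` together with a
`G`-measurable uniform random variable independent of `ξ`. -/
theorem stmt_6 {Ω H₀ : Type*} (G : MeasurableSpace Ω) [MeasurableSpace Ω]
    [NormedAddCommGroup H₀] [InnerProductSpace ℝ H₀] [CompleteSpace H₀]
    [SecondCountableTopology H₀] [Nontrivial H₀]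
    (hG : G ≤ ‹MeasurableSpace Ω›)
    (P : Measure Ω) [IsProbabilityMeasure P]
    (T : ℝ) (hT : 0 < T)
    [MeasurableSpace (PathSp T H₀)] [BorelSpace (PathSp T H₀)]
    (hUG : ∃ U : Ω → ℝ, Measurable[G] U ∧
      P.map U = volume.restrict (Set.Icc (0:ℝ) 1))
    (hrich : ∀ ν : Measure (PathSp T H₀), IsProbabilityMeasure ν →
      Integrable (fun x : PathSp T H₀ => ‖x‖ ^ 2) ν →
      ∃ ξ : Ω → PathSp T H₀,
        Measurable[G] ξ ∧ Integrable (fun ω => ‖ξ ω‖ ^ 2) P ∧ P.map ξ = ν)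
    (μ : Measure (PathSp T H₀)) [IsProbabilityMeasure μ]
    (hμ2 : Integrable (fun x : PathSp T H₀ => ‖x‖ ^ 2) μ) :
    ∃ (ξ : Ω → PathSp T H₀) (Uξ : Ω → ℝ),
      Measurable[G] ξ ∧ Integrable (fun ω => ‖ξ ω‖ ^ 2) P ∧ P.map ξ = μ ∧
      Measurable[G] Uξ ∧ P.map Uξ = volume.restrict (Set.Icc (0:ℝ) 1) ∧
      ProbabilityTheory.IndepFun ξ Uξ P :=
  stmt_6_general G hG P T hT hrich μ hμ2
end
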